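/- Let f, q₁, q₂ be probability densities on ℝ and let S = supp(q₁) ∪ supp(q₂). If the quantity K = sup_{x∈S} √(f(x))/(√(q₁(x)) + √(q₂(x))) is finite, then |H²(f,q₁) − H²(f,q₂)| ≤ K · ∫|q₁(x) − q₂(x)| dx. -/
import Mathlib


open MeasureTheory

/-- A probability density on ℝ (with respect to Lebesgue measure). -/
def IsDensity (f : ℝ → ℝ) : Prop :=
  Measurable f ∧ (∀ x, 0 ≤ f x) ∧ ∫ x, f x = 1

/-- The squared Hellinger distance `H²(f,g) = ½∫(√f − √g)²`. -/
noncomputable def hell2 (f g : ℝ → ℝ) : ℝ :=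
  (1 / 2) * ∫ x, (Real.sqrt (f x) - Real.sqrt (g x)) ^ 2

lemma density_integrable {f : ℝ → ℝ} (hf : IsDensity f) : Integrable f := by
  by_contra h
  have := hf.2.2
  rw [integral_undef h] at this
  norm_num at this

lemma sq_diff_integrable {f q : ℝ → ℝ} (hf : IsDensity f) (hq : IsDensity q) :
    Integrable (fun x => (Real.sqrt (f x) - Real.sqrt (q x)) ^ 2) := by
  have hfi := density_integrable hf
  have hqi := density_integrable hq
  refine Integrable.mono' ((hfi.add hqi).const_mul 2) ?_ ?_
  · exact (((hf.1.sqrt.sub hq.1.sqrt).pow_const 2)).aestronglyMeasurable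
  · filter_upwards with x
    simp only [Pi.add_apply]
    rw [Real.norm_eq_abs, abs_of_nonneg (sq_nonneg _)]
    have h1 : Real.sqrt (f x) ^ 2 = f x := Real.sq_sqrt (hf.2.1 x)
    have h2 : Real.sqrt (q x) ^ 2 = q x := Real.sq_sqrt (hq.2.1 x)
    nlinarith [sq_nonneg (Real.sqrt (f x) + Real.sqrt (q x))]

theorem stmt_16 (f q₁ q₂ : ℝ → ℝ) (hf : IsDensity f) (hq₁ : IsDensity q₁)
    (hq₂ : IsDensity q₂)
    (S : Set ℝ) (hS : S = {x | 0 < q₁ x} ∪ {x | 0 < q₂ x})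
    (hK : BddAbove
      ((fun x => Real.sqrt (f x) / (Real.sqrt (q₁ x) + Real.sqrt (q₂ x))) '' S)) :
    |hell2 f q₁ - hell2 f q₂| ≤
      sSup ((fun x => Real.sqrt (f x) / (Real.sqrt (q₁ x) + Real.sqrt (q₂ x))) '' S) *
        ∫ x, |q₁ x - q₂ x| := by
  set K := sSup ((fun x => Real.sqrt (f x) / (Real.sqrt (q₁ x) + Real.sqrt (q₂ x))) '' S)
    with hKdef
  have hfi := density_integrable hf
  have hq1i := density_integrable hq₁
  have hq2i := density_integrable hq₂
  set g : ℝ → ℝ := fun x => Real.sqrt (f x) * (Real.sqrt (q₁ x) - Real.sqrt (q₂ x)) with hg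
  have hgmeas : Measurable g := hf.1.sqrt.mul (hq₁.1.sqrt.sub hq₂.1.sqrt)
  have hgi : Integrable g := by
    refine Integrable.mono' (hfi.add ((hq1i.add hq2i).const_mul (1/2))) ?_ ?_
    · exact hgmeas.aestronglyMeasurable
    · filter_upwards with x
      simp only [Pi.add_apply]
      rw [Real.norm_eq_abs, hg]
      have h0 : Real.sqrt (f x) ^ 2 = f x := Real.sq_sqrt (hf.2.1 x)
      have h1 : Real.sqrt (q₁ x) ^ 2 = q₁ x := Real.sq_sqrt (hq₁.2.1 x)
      have h2 : Real.sqrt (q₂ x) ^ 2 = q₂ x := Real.sq_sqrt (hq₂.2.1 x)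
      have hf0 := Real.sqrt_nonneg (f x)
      have hs1 := Real.sqrt_nonneg (q₁ x)
      have hs2 := Real.sqrt_nonneg (q₂ x)
      rw [abs_le]
      constructor <;> nlinarith [sq_nonneg (Real.sqrt (f x) - Real.sqrt (q₁ x)),
        sq_nonneg (Real.sqrt (f x) - Real.sqrt (q₂ x)),
        sq_nonneg (Real.sqrt (f x) + Real.sqrt (q₁ x)),
        sq_nonneg (Real.sqrt (f x) + Real.sqrt (q₂ x))]
  -- pointwise bound
  have hpt : ∀ x, |g x| ≤ K * |q₁ x - q₂ x| := by
    intro x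
    by_cases hx : x ∈ S
    · have hs : 0 < Real.sqrt (q₁ x) + Real.sqrt (q₂ x) := by
        rw [hS] at hx
        rcases hx with hx | hx
        · have : 0 < Real.sqrt (q₁ x) := Real.sqrt_pos.mpr hx
          linarith [Real.sqrt_nonneg (q₂ x)]
        · have : 0 < Real.sqrt (q₂ x) := Real.sqrt_pos.mpr hx
          linarith [Real.sqrt_nonneg (q₁ x)]
      have hKx : Real.sqrt (f x) / (Real.sqrt (q₁ x) + Real.sqrt (q₂ x)) ≤ K :=
        le_csSup hK ⟨x, hx, rfl⟩
      have hdiff : Real.sqrt (q₁ x) - Real.sqrt (q₂ x) =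
          (q₁ x - q₂ x) / (Real.sqrt (q₁ x) + Real.sqrt (q₂ x)) := by
        have h1 : Real.sqrt (q₁ x) ^ 2 = q₁ x := Real.sq_sqrt (hq₁.2.1 x)
        have h2 : Real.sqrt (q₂ x) ^ 2 = q₂ x := Real.sq_sqrt (hq₂.2.1 x)
        field_simp
        nlinarith [Real.sq_sqrt (hq₁.2.1 x), Real.sq_sqrt (hq₂.2.1 x)]
      have : g x = (Real.sqrt (f x) / (Real.sqrt (q₁ x) + Real.sqrt (q₂ x))) *
          (q₁ x - q₂ x) := by
        rw [hg]; simp only [hdiff]; field_simp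
      rw [this, abs_mul]
      have habs : |Real.sqrt (f x) / (Real.sqrt (q₁ x) + Real.sqrt (q₂ x))| =
          Real.sqrt (f x) / (Real.sqrt (q₁ x) + Real.sqrt (q₂ x)) :=
        abs_of_nonneg (div_nonneg (Real.sqrt_nonneg _) hs.le)
      rw [habs]
      exact mul_le_mul_of_nonneg_right hKx (abs_nonneg _)
    · have h1 : q₁ x = 0 := by
        by_contra h
        exact hx (hS ▸ Or.inl (lt_of_le_of_ne (hq₁.2.1 x) (Ne.symm h)))
      have h2 : q₂ x = 0 := by
        by_contra h
        exact hx (hS ▸ Or.inr (lt_of_le_of_ne (hq₂.2.1 x) (Ne.symm h)))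
      simp [hg, h1, h2]
  -- the identity hell2 f q₁ - hell2 f q₂ = - ∫ g
  have hsq1 := sq_diff_integrable hf hq₁
  have hsq2 := sq_diff_integrable hf hq₂
  have hid : hell2 f q₁ - hell2 f q₂ = - ∫ x, g x := by
    unfold hell2
    rw [← mul_sub, ← integral_sub hsq1 hsq2]
    have key : ∀ x, (Real.sqrt (f x) - Real.sqrt (q₁ x)) ^ 2 -
        (Real.sqrt (f x) - Real.sqrt (q₂ x)) ^ 2 = (q₁ x - q₂ x) - 2 * g x := by
      intro x
      have h1 : Real.sqrt (q₁ x) ^ 2 = q₁ x := Real.sq_sqrt (hq₁.2.1 x)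
      have h2 : Real.sqrt (q₂ x) ^ 2 = q₂ x := Real.sq_sqrt (hq₂.2.1 x)
      rw [hg]
      linear_combination h1 - h2
    simp_rw [key]
    have hsub : Integrable (fun a => q₁ a - q₂ a) := hq1i.sub hq2i
    have hcm : Integrable (fun a => 2 * g a) := hgi.const_mul 2
    rw [integral_sub hsub hcm, integral_sub hq1i hq2i, integral_const_mul,
      hq₁.2.2, hq₂.2.2]
    ring
  rw [hid, abs_neg]
  calc |∫ x, g x| ≤ ∫ x, |g x| := by
        simpa [Real.norm_eq_abs] using norm_integral_le_integral_norm g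
    _ ≤ ∫ x, K * |q₁ x - q₂ x| := by
        refine integral_mono hgi.abs (((hq1i.sub hq2i).abs).const_mul K) hpt
    _ = K * ∫ x, |q₁ x - q₂ x| := integral_const_mul K _
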